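/- For all real d×d matrices M and N and any real p with 1 < p < 2, the inequality (p−1)|M−N|^2 ≤ ((|M|^{p-2}M − |N|^{p-2}N) : (M−N)) · (|M|^p + |N|^p)^{(2−p)/p} holds, where : denotes the Frobenius inner product and |·| the Frobenius norm. -/

import Mathlib

/-- Frobenius inner product of real `d × d` matrices. -/
def frobInner {d : ℕ} (A B : Matrix (Fin d) (Fin d) ℝ) : ℝ :=
  ∑ i, ∑ j, A i j * B i j

/-- Frobenius norm of a real `d × d` matrix. -/
noncomputable def frobNorm {d : ℕ} (A : Matrix (Fin d) (Fin d) ℝ) : ℝ :=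
  Real.sqrt (frobInner A A)

/-- The power-law map `A ↦ |A|^{p-2} A`, extended by `0` at `A = 0`. -/
noncomputable def powerLaw {d : ℕ} (p : ℝ) (A : Matrix (Fin d) (Fin d) ℝ) :
    Matrix (Fin d) (Fin d) ℝ :=
  if A = 0 then 0 else (frobNorm A) ^ (p - 2) • A

/-!
The Frobenius structure is the Euclidean one on `Fin d × Fin d`, so we work in a real inner product
space. With `x = ‖u‖`, `y = ‖v‖`, `c = ⟪u, v⟫`, both sides of the inequality are affine in `c`, and
`|c| ≤ x * y` by Cauchy–Schwarz, so it suffices to treat `c = ± x * y`. For `y ≤ x` these reduce to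
`(p - 1) (x ∓ y) ≤ (x ^ (p - 1) ∓ y ^ (p - 1)) x ^ (2 - p)`, which follows from
`x ^ (p - 1) x ^ (2 - p) = x` and weighted AM-GM, together with
`x ^ (2 - p) ≤ (x ^ p + y ^ p) ^ ((2 - p) / p)`.
-/

section Scalar

variable {p x y : ℝ}

theorem rpow_le_rpow_add_rpow_rpow_div {q : ℝ} (hp : 0 < p) (hq : 0 ≤ q) (hx : 0 ≤ x)
    (hy : 0 ≤ y) : x ^ q ≤ (x ^ p + y ^ p) ^ (q / p) :=
  calc x ^ q = (x ^ p) ^ (q / p) := by rw [← Real.rpow_mul hx, mul_div_cancel₀ _ hp.ne']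
    _ ≤ (x ^ p + y ^ p) ^ (q / p) :=
      Real.rpow_le_rpow (by positivity) (le_add_of_nonneg_right (by positivity))
        (div_nonneg hq hp.le)

theorem rpow_sub_one_mul_rpow_two_sub (hx : 0 ≤ x) : x ^ (p - 1) * x ^ (2 - p) = x := by
  rw [← Real.rpow_add' hx (by ring_nf; norm_num)]
  ring_nf
  exact Real.rpow_one x

theorem rpow_sub_two_mul_self (hp : p ≠ 1) (hx : 0 ≤ x) : x ^ (p - 2) * x = x ^ (p - 1) := by
  rw [← Real.rpow_add_one' hx (by contrapose! hp; linarith)]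
  ring_nf

theorem sub_one_mul_sub_le_rpow_sub_rpow_mul (hp1 : 1 ≤ p) (hp2 : p ≤ 2) (hy : 0 ≤ y)
    (hyx : y ≤ x) : (p - 1) * (x - y) ≤ (x ^ (p - 1) - y ^ (p - 1)) * x ^ (2 - p) := by
  have amgm : y ^ (p - 1) * x ^ (2 - p) ≤ (p - 1) * y + (2 - p) * x :=
    Real.geom_mean_le_arith_mean2_weighted (by linarith) (by linarith) hy (hy.trans hyx)
      (by ring)
  have hx := rpow_sub_one_mul_rpow_two_sub (p := p) (hy.trans hyx)
  linarith

theorem sub_one_mul_add_le_rpow_add_rpow_mul (hp2 : p ≤ 2) (hy : 0 ≤ y) (hyx : y ≤ x) :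
    (p - 1) * (x + y) ≤ (x ^ (p - 1) + y ^ (p - 1)) * x ^ (2 - p) := by
  have hy' : y ≤ y ^ (p - 1) * x ^ (2 - p) :=
    calc y = y ^ (p - 1) * y ^ (2 - p) := (rpow_sub_one_mul_rpow_two_sub hy).symm
      _ ≤ y ^ (p - 1) * x ^ (2 - p) :=
        mul_le_mul_of_nonneg_left (Real.rpow_le_rpow hy hyx (by linarith)) (by positivity)
  have hx := rpow_sub_one_mul_rpow_two_sub (p := p) (hy.trans hyx)
  nlinarith

theorem sub_one_mul_sub_sq_le (hp1 : 1 ≤ p) (hp2 : p ≤ 2) (hx : 0 ≤ x) (hy : 0 ≤ y) :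
    (p - 1) * (x - y) ^ 2 ≤
      (x ^ (p - 1) - y ^ (p - 1)) * (x - y) * (x ^ p + y ^ p) ^ ((2 - p) / p) := by
  wlog hyx : y ≤ x generalizing x y
  · have h := this hy hx (le_of_not_ge hyx)
    rw [add_comm (y ^ p)] at h
    linarith
  have hS := rpow_le_rpow_add_rpow_rpow_div (p := p) (q := 2 - p) (by linarith) (by linarith) hx hy
  have hmono : 0 ≤ x ^ (p - 1) - y ^ (p - 1) :=
    sub_nonneg.2 (Real.rpow_le_rpow hy hyx (by linarith))
  calc (p - 1) * (x - y) ^ 2 = (p - 1) * (x - y) * (x - y) := by ring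
    _ ≤ (x ^ (p - 1) - y ^ (p - 1)) * x ^ (2 - p) * (x - y) :=
      mul_le_mul_of_nonneg_right (sub_one_mul_sub_le_rpow_sub_rpow_mul hp1 hp2 hy hyx)
        (sub_nonneg.2 hyx)
    _ = (x ^ (p - 1) - y ^ (p - 1)) * (x - y) * x ^ (2 - p) := by ring
    _ ≤ _ := mul_le_mul_of_nonneg_left hS (mul_nonneg hmono (sub_nonneg.2 hyx))

theorem sub_one_mul_add_sq_le (hp1 : 1 ≤ p) (hp2 : p ≤ 2) (hx : 0 ≤ x) (hy : 0 ≤ y) :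
    (p - 1) * (x + y) ^ 2 ≤
      (x ^ (p - 1) + y ^ (p - 1)) * (x + y) * (x ^ p + y ^ p) ^ ((2 - p) / p) := by
  wlog hyx : y ≤ x generalizing x y
  · have h := this hy hx (le_of_not_ge hyx)
    rw [add_comm (y ^ p)] at h
    linarith
  have hS := rpow_le_rpow_add_rpow_rpow_div (p := p) (q := 2 - p) (by linarith) (by linarith) hx hy
  have hsum : 0 ≤ x ^ (p - 1) + y ^ (p - 1) := by positivity
  calc (p - 1) * (x + y) ^ 2 = (p - 1) * (x + y) * (x + y) := by ring
    _ ≤ (x ^ (p - 1) + y ^ (p - 1)) * x ^ (2 - p) * (x + y) :=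
      mul_le_mul_of_nonneg_right (sub_one_mul_add_le_rpow_add_rpow_mul hp2 hy hyx)
        (add_nonneg hx hy)
    _ = (x ^ (p - 1) + y ^ (p - 1)) * (x + y) * x ^ (2 - p) := by ring
    _ ≤ _ := mul_le_mul_of_nonneg_left hS (mul_nonneg hsum (add_nonneg hx hy))

theorem add_mul_nonneg_of_abs_le {α : Type*} [CommRing α] [LinearOrder α]
    [IsStrictOrderedRing α] {a b c t : α} (hpos : 0 ≤ a + b * t) (hneg : 0 ≤ a - b * t)
    (hc : |c| ≤ t) : 0 ≤ a + b * c := by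
  obtain ⟨hc₁, hc₂⟩ := abs_le.mp hc
  rcases le_total 0 b with hb | hb
  · nlinarith [mul_le_mul_of_nonneg_left hc₁ hb]
  · nlinarith [mul_le_mul_of_nonpos_left hc₂ hb]

theorem sub_one_mul_le_of_abs_le_mul {c : ℝ} (hp1 : 1 < p) (hp2 : p ≤ 2) (hx : 0 ≤ x)
    (hy : 0 ≤ y) (hc : |c| ≤ x * y) :
    (p - 1) * (x ^ 2 - 2 * c + y ^ 2) ≤
      (x ^ (p - 2) * x ^ 2 - (x ^ (p - 2) + y ^ (p - 2)) * c + y ^ (p - 2) * y ^ 2) *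
        (x ^ p + y ^ p) ^ ((2 - p) / p) := by
  set S := (x ^ p + y ^ p) ^ ((2 - p) / p)
  have hx' : x ^ (p - 1) = x ^ (p - 2) * x := (rpow_sub_two_mul_self hp1.ne' hx).symm
  have hy' : y ^ (p - 1) = y ^ (p - 2) * y := (rpow_sub_two_mul_self hp1.ne' hy).symm
  have hsub := sub_one_mul_sub_sq_le hp1.le hp2 hx hy
  have hadd := sub_one_mul_add_sq_le hp1.le hp2 hx hy
  rw [hx', hy'] at hsub hadd
  have := add_mul_nonneg_of_abs_le
    (a := (x ^ (p - 2) * x ^ 2 + y ^ (p - 2) * y ^ 2) * S - (p - 1) * (x ^ 2 + y ^ 2))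
    (b := 2 * (p - 1) - (x ^ (p - 2) + y ^ (p - 2)) * S) (by linarith) (by linarith) hc
  linarith

end Scalar

theorem sub_one_mul_norm_sub_sq_le_inner_rpow_smul_sub {E : Type*} [NormedAddCommGroup E]
    [InnerProductSpace ℝ E] {p : ℝ} (hp1 : 1 < p) (hp2 : p ≤ 2) (u v : E) :
    (p - 1) * ‖u - v‖ ^ 2 ≤
      inner ℝ (‖u‖ ^ (p - 2) • u - ‖v‖ ^ (p - 2) • v) (u - v) *
        (‖u‖ ^ p + ‖v‖ ^ p) ^ ((2 - p) / p) := by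
  have h := sub_one_mul_le_of_abs_le_mul hp1 hp2 (norm_nonneg u) (norm_nonneg v)
    (abs_real_inner_le_norm u v)
  rw [norm_sub_sq_real]
  simp only [inner_sub_left, inner_sub_right, real_inner_smul_left, real_inner_self_eq_norm_sq,
    real_inner_comm u v]
  linarith

def matrixToEuclidean (d : ℕ) :
    Matrix (Fin d) (Fin d) ℝ →ₗ[ℝ] EuclideanSpace ℝ (Fin d × Fin d) where
  toFun A := WithLp.toLp 2 fun ij => A ij.1 ij.2
  map_add' _ _ := rfl
  map_smul' _ _ := rfl

theorem inner_matrixToEuclidean {d : ℕ} (A B : Matrix (Fin d) (Fin d) ℝ) :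
    inner ℝ (matrixToEuclidean d A) (matrixToEuclidean d B) = frobInner A B := by
  simp only [PiLp.inner_apply, Fintype.sum_prod_type, frobInner]
  exact Finset.sum_congr rfl fun i _ => Finset.sum_congr rfl fun j _ => mul_comm _ _

theorem norm_matrixToEuclidean {d : ℕ} (A : Matrix (Fin d) (Fin d) ℝ) :
    ‖matrixToEuclidean d A‖ = frobNorm A := by
  rw [norm_eq_sqrt_real_inner, inner_matrixToEuclidean, frobNorm]

theorem powerLaw_eq_smul {d : ℕ} (p : ℝ) (A : Matrix (Fin d) (Fin d) ℝ) :
    powerLaw p A = frobNorm A ^ (p - 2) • A := by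
  unfold powerLaw
  split_ifs with h <;> simp [h]

theorem powerLaw_strong_monotone_p_lt_two {d : ℕ} (p : ℝ) (hp1 : 1 < p) (hp2 : p < 2)
    (M N : Matrix (Fin d) (Fin d) ℝ) :
    (p - 1) * frobNorm (M - N) ^ (2 : ℝ) ≤
      frobInner (powerLaw p M - powerLaw p N) (M - N) *
        (frobNorm M ^ p + frobNorm N ^ p) ^ ((2 - p) / p) := by
  simp only [powerLaw_eq_smul, Real.rpow_two, ← norm_matrixToEuclidean,
    ← inner_matrixToEuclidean, map_sub, map_smul]
  exact sub_one_mul_norm_sub_sq_le_inner_rpow_smul_sub hp1 hp2.le _ _
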